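/- Let V = ℚ⁴ with basis v₁,v₂,v₃,v₄ and let E ⊂ Λ²V be the 3-dimensional subspace spanned by v₁∧v₂ + v₃∧v₄, v₁∧v₃ − v₂∧v₄, and v₁∧v₄ + v₂∧v₃. Then E contains no nonzero decomposable element: if x, y ∈ V and x∧y ∈ E, then x∧y = 0 (i.e. x and y are linearly dependent). -/

import Mathlib

open ExteriorAlgebra

/-- The standard basis vectors of `ℚ⁴`. -/
noncomputable def stdVec (i : Fin 4) : Fin 4 → ℚ := Pi.single i 1

/-- The subspace `E ⊂ Λ²(ℚ⁴)` spanned by `v₁∧v₂ + v₃∧v₄`, `v₁∧v₃ − v₂∧v₄` and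
`v₁∧v₄ + v₂∧v₃`, viewed inside the exterior algebra of `ℚ⁴`. -/
noncomputable def Esub : Submodule ℚ (ExteriorAlgebra ℚ (Fin 4 → ℚ)) :=
  Submodule.span ℚ
    {ι ℚ (stdVec 0) * ι ℚ (stdVec 1) + ι ℚ (stdVec 2) * ι ℚ (stdVec 3),
     ι ℚ (stdVec 0) * ι ℚ (stdVec 2) - ι ℚ (stdVec 1) * ι ℚ (stdVec 3),
     ι ℚ (stdVec 0) * ι ℚ (stdVec 3) + ι ℚ (stdVec 1) * ι ℚ (stdVec 2)}

/-!
On `Λ²ℚ⁴` the volume form turns `ω ↦ ω ∧ ω` into a rational quadratic form. It vanishes on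
every decomposable `x ∧ y`, since `x ∧ y ∧ x ∧ y = 0`. On `E` it is positive definite: the three
given generators are orthogonal for it, and each has `ω ∧ ω = 2 v₁ ∧ v₂ ∧ v₃ ∧ v₄`.
-/

namespace ExteriorAlgebra

variable {R M : Type*} [CommRing R] [AddCommGroup M] [Module R M]

theorem ι_mul_ι_swap (a b : M) : ι R b * ι R a = -(ι R a * ι R b) :=
  eq_neg_of_add_eq_zero_left (ι_add_mul_swap b a)

@[simp]
theorem ι_mul_ι_mul_eq_zero (a : M) (z : ExteriorAlgebra R M) : ι R a * (ι R a * z) = 0 := by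
  rw [← mul_assoc, ι_sq_zero, zero_mul]

@[simp]
theorem ι_mul_ι_mul_ι_mul_eq_zero (a b : M) (z : ExteriorAlgebra R M) :
    ι R a * (ι R b * (ι R a * z)) = 0 := by
  rw [← mul_assoc (ι R b), ι_mul_ι_swap, neg_mul, mul_assoc, mul_neg, ι_mul_ι_mul_eq_zero, neg_zero]

@[simp]
theorem ι_mul_ι_mul_ι_mul_ι_eq_zero (a b c : M) : ι R a * (ι R b * (ι R c * ι R a)) = 0 := by
  rw [ι_mul_ι_swap, mul_neg, mul_neg, ι_mul_ι_mul_ι_mul_eq_zero, neg_zero]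

theorem ι_mul_ι_mul_self (x y : M) : ι R x * ι R y * (ι R x * ι R y) = 0 := by
  rw [mul_assoc, ι_mul_ι_mul_ι_mul_eq_zero]

end ExteriorAlgebra

noncomputable def volForm (R : Type*) [CommRing R] (n : ℕ) :
    ExteriorAlgebra R (Fin n → R) →ₗ[R] R :=
  liftAlternating fun k =>
    if h : k = n then Matrix.detRowAlternating.domDomCongr (finCongr h.symm) else 0

theorem volForm_ιMulti {R : Type*} [CommRing R] {n : ℕ} (v : Fin n → Fin n → R) :
    volForm R n (ιMulti R n v) = (Matrix.of v).det := by
  simp only [volForm, liftAlternating_apply_ιMulti, ↓reduceDIte, finCongr_refl,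
    AlternatingMap.domDomCongr_refl]
  rfl

theorem volForm_ι_mul_ι_mul_ι_mul_ι {R : Type*} [CommRing R] (a b c d : Fin 4 → R) :
    volForm R 4 (ι R a * (ι R b * (ι R c * ι R d))) = (Matrix.of ![a, b, c, d]).det := by
  rw [← volForm_ιMulti, ιMulti_apply]
  simp [List.ofFn_succ]

noncomputable def Egen : Fin 3 → ExteriorAlgebra ℚ (Fin 4 → ℚ) :=
  ![ι ℚ (stdVec 0) * ι ℚ (stdVec 1) + ι ℚ (stdVec 2) * ι ℚ (stdVec 3),
    ι ℚ (stdVec 0) * ι ℚ (stdVec 2) - ι ℚ (stdVec 1) * ι ℚ (stdVec 3),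
    ι ℚ (stdVec 0) * ι ℚ (stdVec 3) + ι ℚ (stdVec 1) * ι ℚ (stdVec 2)]

theorem Esub_eq_span_range_Egen : Esub = Submodule.span ℚ (Set.range Egen) := by
  rw [Esub, Egen]
  congr 1
  ext ω
  simp only [Set.mem_insert_iff, Set.mem_singleton_iff, Set.mem_range, Fin.exists_fin_succ]
  simp [eq_comm]

theorem volForm_Egen_mul_Egen (i j : Fin 3) :
    volForm ℚ 4 (Egen i * Egen j) = if i = j then 2 else 0 := by
  fin_cases i <;> fin_cases j <;>
  simp [Egen, mul_add, add_mul, mul_sub, sub_mul, mul_assoc, volForm_ι_mul_ι_mul_ι_mul_ι,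
    Matrix.det_succ_row_zero, Fin.sum_univ_succ, stdVec, Pi.single_apply, Fin.succAbove,
    one_add_one_eq_two]

theorem volForm_mul_self_sum_smul_Egen (c : Fin 3 → ℚ) :
    volForm ℚ 4 ((∑ i, c i • Egen i) * ∑ i, c i • Egen i) = 2 * ∑ i, c i ^ 2 := by
  simp only [Finset.sum_mul, Finset.mul_sum, map_sum, smul_mul_smul_comm, map_smul,
    volForm_Egen_mul_Egen, smul_eq_mul, mul_ite, mul_zero, Finset.sum_ite_eq', Finset.mem_univ,
    if_true]
  exact Finset.sum_congr rfl fun i _ => by ring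

theorem eq_zero_of_mem_Esub_of_volForm_mul_self_eq_zero {ω : ExteriorAlgebra ℚ (Fin 4 → ℚ)}
    (hω : ω ∈ Esub) (h : volForm ℚ 4 (ω * ω) = 0) : ω = 0 := by
  rw [Esub_eq_span_range_Egen, Submodule.mem_span_range_iff_exists_fun] at hω
  obtain ⟨c, rfl⟩ := hω
  rw [volForm_mul_self_sum_smul_Egen, mul_eq_zero, Finset.sum_eq_zero_iff_of_nonneg] at h
  · have hc : c = 0 := funext fun i => by simpa using h.resolve_left two_ne_zero i (by simp)
    simp [hc]
  · exact fun i _ => sq_nonneg (c i)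

/-- `E` contains no nonzero decomposable element: if `x ∧ y ∈ E` then
`x ∧ y = 0`. -/
theorem stmt_8 (x y : Fin 4 → ℚ) (h : ι ℚ x * ι ℚ y ∈ Esub) :
    ι ℚ x * ι ℚ y = (0 : ExteriorAlgebra ℚ (Fin 4 → ℚ)) :=
  eq_zero_of_mem_Esub_of_volForm_mul_self_eq_zero h (by rw [ι_mul_ι_mul_self, map_zero])
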